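/- arXiv:1407.2801 — 3 statements merged into one kernel-verified Lean document; each statement's English description precedes it below -/
import Mathlib

section
/- Let A, B be n×n symmetric real matrices such that A is a Robinson similarity matrix, B is a Robinson dissimilarity matrix, and at least one of A or B is a Toeplitz matrix. Then the identity permutation is an optimal solution to QAP(A,B); that is, ⟨A_π, B⟩ ≥ ⟨A, B⟩ for every permutation π of [n]. -/
/-- `A` is a Robinson similarity matrix: it is symmetric and its entries decrease
monotonically in rows and columns when moving away from the main diagonal, i.e.
`A i k ≤ min (A i j) (A j k)` for all `i ≤ j ≤ k`. -/
def IsRobinsonSim {n : ℕ} (A : Matrix (Fin n) (Fin n) ℝ) : Prop :=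
  (∀ i j, A i j = A j i) ∧
  ∀ i j k : Fin n, i ≤ j → j ≤ k → A i k ≤ min (A i j) (A j k)

/-- `B` is a Robinson dissimilarity matrix: it is symmetric and
`max (B i j) (B j k) ≤ B i k` for all `i ≤ j ≤ k`. -/
def IsRobinsonDissim {n : ℕ} (B : Matrix (Fin n) (Fin n) ℝ) : Prop :=
  (∀ i j, B i j = B j i) ∧
  ∀ i j k : Fin n, i ≤ j → j ≤ k → max (B i j) (B j k) ≤ B i k

/-- `A` is a Toeplitz matrix: `A i j = A (i+1) (j+1)` whenever the indices make sense. -/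
def IsToeplitz {n : ℕ} (A : Matrix (Fin n) (Fin n) ℝ) : Prop :=
  ∀ (i j : Fin n) (hi : i.val + 1 < n) (hj : j.val + 1 < n),
    A i j = A ⟨i.val + 1, hi⟩ ⟨j.val + 1, hj⟩

/-- The matrix `A_π` with entries `(A_π) i j = A (π i) (π j)`. -/
def permMat {n : ℕ} (A : Matrix (Fin n) (Fin n) ℝ) (π : Equiv.Perm (Fin n)) :
    Matrix (Fin n) (Fin n) ℝ :=
  Matrix.of fun i j => A (π i) (π j)

/-- The trace inner product `⟨A,B⟩ = ∑_{i,j} A i j * B i j`. -/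
def mInner {n : ℕ} (A B : Matrix (Fin n) (Fin n) ℝ) : ℝ :=
  ∑ i, ∑ j, A i j * B i j

/-- The 0/1 Toeplitz Robinson dissimilarity matrix `B^Δ_n`, with `(i,j)` entry `1`
iff `|i - j| ≥ n - Δ` (indices thought of as `1,…,n`, here `0`-based). -/
def BDelta (n Δ : ℕ) : Matrix (Fin n) (Fin n) ℝ :=
  Matrix.of fun i j => if (n : ℤ) - (Δ : ℤ) ≤ |(i.val : ℤ) - (j.val : ℤ)| then 1 else 0

/-- The set `E^Δ_n` of (unordered, represented here with first coordinate smaller)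
upper-triangular support positions of `B^Δ_n`: the pairs `(i,j)` with `i < j` and
`j - i ≥ n - Δ`, i.e. `i + (n - Δ) ≤ j`. -/
def EDelta (n Δ : ℕ) : Finset (Fin n × Fin n) :=
  Finset.univ.filter (fun p => p.1.val + (n - Δ) ≤ p.2.val)

/-!
If `A` is Toeplitz, replacing `(A, B, π)` by `(-B, -A, π⁻¹)` leaves `⟨A_π, B⟩` and `⟨A, B⟩`
unchanged and makes the dissimilarity the Toeplitz factor. A Toeplitz Robinson dissimilarity is
`B i j = b |i - j|` with `b` nondecreasing, hence a nonnegative combination of the all-ones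
matrix and of the band indicators `[|i - j| ≥ m]`, `m ≥ 1`. It therefore suffices that the
identity minimises the band sum `∑_{j - i ≥ m} A (π i) (π j)`.

This is proved for any sequence of distinct points of a linear order against its sorted
rearrangement, by induction on the length: delete the largest point `M` from both. In either
sequence this loses `N - m` pairs of positions at distance `≥ m`. For the sorted sequence they
are the pairs `(x, M)` with the `N - m` smallest `x`. For the other one, by the Robinson
property each lost pair `{x, y}` has `A x y ≥ A (min x y) M`, and the points `min x y` are
distinct and different from `M`, so the lost weight is at least as large.
-/

open Finset Function

theorem Fin.val_succAbove_cases {n : ℕ} (p : Fin (n + 1)) (i : Fin n) :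
    i.val < p.val ∧ (p.succAbove i).val = i.val ∨
      p.val ≤ i.val ∧ (p.succAbove i).val = i.val + 1 := by
  rcases lt_or_ge i.val p.val with h | h
  · exact Or.inl ⟨h, by rw [Fin.succAbove_of_castSucc_lt _ _ h]; rfl⟩
  · exact Or.inr ⟨h, by rw [Fin.succAbove_of_le_castSucc _ _ h]; rfl⟩

theorem sum_range_card_le_sum {M : Type*} [AddCommMonoid M] [PartialOrder M]
    [IsOrderedAddMonoid M] {G : ℕ → M} (hG : Monotone G) (s : Finset ℕ) :
    ∑ i ∈ range s.card, G i ≤ ∑ x ∈ s, G x := by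
  induction s using Finset.induction_on_max with
  | empty => simp
  | insert a s ha ih =>
    have has : a ∉ s := fun h => lt_irrefl a (ha a h)
    have hcard : s.card ≤ a := by
      simpa using card_le_card fun x hx => mem_range.2 (ha x hx)
    rw [card_insert_of_notMem has, sum_range_succ, sum_insert has, add_comm (G a)]
    exact add_le_add ih (hG hcard)

def bandPairs (N m : ℕ) : Finset (Fin N × Fin N) :=
  univ.filter fun q => q.1.val + m ≤ q.2.val

-- The pairs of positions at distance `≥ m` that deleting position `p` destroys: those through
-- `p`, and those straddling `p` at distance exactly `m`.
def crossPair (m : ℕ) {K : ℕ} (p : Fin (K + 1)) (t : Fin (K + 1 - m)) :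
    Fin (K + 1) × Fin (K + 1) :=
  (⟨min t p, by omega⟩, ⟨max p (t + m), by omega⟩)

theorem sum_bandPairs_succ {M : Type*} [AddCommMonoid M] (m : ℕ) {K : ℕ} (p : Fin (K + 1))
    (g : Fin (K + 1) × Fin (K + 1) → M) :
    ∑ q ∈ bandPairs (K + 1) m, g q =
      ∑ q ∈ bandPairs K m, g (p.succAbove q.1, p.succAbove q.2) + ∑ t, g (crossPair m p t) := by
  classical
  let crossing : Fin (K + 1) × Fin (K + 1) → Prop := fun q =>
    q.1 = p ∨ q.2 = p ∨ (q.1 < p ∧ p < q.2 ∧ q.2.val = q.1.val + m)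
  rw [← sum_filter_not_add_sum_filter _ crossing]
  congr 1
  · refine (sum_bij (fun q _ => (p.succAbove q.1, p.succAbove q.2)) ?_ ?_ ?_ fun _ _ => rfl).symm
    · rintro ⟨i, j⟩ hq
      simp only [bandPairs, mem_filter, mem_univ, true_and, crossing, Fin.lt_def,
        Fin.ext_iff] at hq ⊢
      rcases Fin.val_succAbove_cases p i with hi | hi <;>
        rcases Fin.val_succAbove_cases p j with hj | hj <;> omega
    · rintro ⟨i, j⟩ _ ⟨i', j'⟩ _ h
      simp only [Prod.mk.injEq, Fin.succAbove_right_inj] at h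
      rw [h.1, h.2]
    · rintro ⟨i, j⟩ hq
      simp only [bandPairs, mem_filter, mem_univ, true_and, crossing, Fin.lt_def,
        Fin.ext_iff] at hq
      obtain ⟨i', rfl⟩ := Fin.exists_succAbove_eq (x := i) (y := p) (by rintro rfl; omega)
      obtain ⟨j', rfl⟩ := Fin.exists_succAbove_eq (x := j) (y := p) (by rintro rfl; omega)
      refine ⟨(i', j'), ?_, rfl⟩
      simp only [bandPairs, mem_filter, mem_univ, true_and]
      rcases Fin.val_succAbove_cases p i' with hi | hi <;>
        rcases Fin.val_succAbove_cases p j' with hj | hj <;> omega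
  · refine (sum_bij (fun t _ => crossPair m p t) ?_ ?_ ?_ fun _ _ => rfl).symm
    · intro t _
      have := t.isLt
      simp only [crossPair, bandPairs, mem_filter, mem_univ, true_and, crossing, Fin.lt_def,
        Fin.ext_iff]
      omega
    · intro t _ t' _ h
      simp only [crossPair, Prod.mk.injEq, Fin.ext_iff] at h
      ext; omega
    · rintro ⟨i, j⟩ hq
      simp only [bandPairs, mem_filter, mem_univ, true_and, crossing, Fin.lt_def,
        Fin.ext_iff] at hq
      have := j.isLt
      refine ⟨⟨if i.val < p.val then i else j - m, by split_ifs <;> omega⟩, mem_univ _, ?_⟩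
      simp only [crossPair, Prod.mk.injEq, Fin.ext_iff]
      split_ifs <;> omega

theorem injective_min_rank_crossPair {m K : ℕ} (hm : 0 < m) {p : Fin (K + 1)}
    {ρ : Fin (K + 1) → Fin (K + 1)} (hρ : Injective ρ) (hρp : ρ p = Fin.last K) :
    Injective fun t => min (ρ (crossPair m p t).1).val (ρ (crossPair m p t).2).val := by
  have endpoint : ∀ t, ∃ q, (q = (crossPair m p t).1 ∨ q = (crossPair m p t).2) ∧ q ≠ p ∧
      min (ρ (crossPair m p t).1).val (ρ (crossPair m p t).2).val = (ρ q).val := by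
    intro t
    have hne : ρ (crossPair m p t).1 ≠ ρ (crossPair m p t).2 := by
      refine hρ.ne fun h => ?_
      simp only [crossPair, Fin.ext_iff] at h
      omega
    have hne' := Fin.val_ne_of_ne hne
    rcases le_total (ρ (crossPair m p t).1).val (ρ (crossPair m p t).2).val with h | h
    · refine ⟨_, Or.inl rfl, fun hp => ?_, min_eq_left h⟩
      have hK : (ρ (crossPair m p t).1).val = K := by rw [hp, hρp, Fin.val_last]
      have := Fin.is_le (ρ (crossPair m p t).2)
      omega
    · refine ⟨_, Or.inr rfl, fun hp => ?_, min_eq_right h⟩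
      have hK : (ρ (crossPair m p t).2).val = K := by rw [hp, hρp, Fin.val_last]
      have := Fin.is_le (ρ (crossPair m p t).1)
      omega
  intro t t' htt
  obtain ⟨q, hq, hqp, hν⟩ := endpoint t
  obtain ⟨q', hq', hqp', hν'⟩ := endpoint t'
  have hqq : q = q' := hρ (Fin.ext (hν.symm.trans (htt.trans hν')))
  subst hqq
  simp only [crossPair, Fin.ext_iff] at hq hq' hqp
  ext; omega

section Robinson

variable {α : Type*}

def bandSum (A : α → α → ℝ) (m : ℕ) {N : ℕ} (f : Fin N → α) : ℝ :=
  ∑ q ∈ bandPairs N m, A (f q.1) (f q.2)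

theorem bandSum_succ (A : α → α → ℝ) (m : ℕ) {K : ℕ} (f : Fin (K + 1) → α) (p : Fin (K + 1)) :
    bandSum A m f =
      bandSum A m (f ∘ p.succAbove) + ∑ t, A (f (crossPair m p t).1) (f (crossPair m p t).2) :=
  sum_bandPairs_succ m p _

theorem range_comp_succAbove {K : ℕ} {f : Fin (K + 1) → α} (hf : Injective f)
    (p : Fin (K + 1)) :
    Set.range (f ∘ p.succAbove) = Set.range f \ {f p} := by
  rw [Set.range_comp, Fin.range_succAbove, Set.image_compl_eq_range_sdiff_image hf,
    Set.image_singleton]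

theorem sum_ite_lt_dist_eq_two_mul_bandSum {A : α → α → ℝ} (hA : ∀ x y, A x y = A y x)
    (k : ℕ) {N : ℕ} (f : Fin N → α) :
    ∑ i : Fin N, ∑ j : Fin N, (if k < Nat.dist i j then A (f i) (f j) else 0) =
      2 * bandSum A (k + 1) f := by
  have split : ∀ i j : Fin N, (if k < Nat.dist i j then A (f i) (f j) else 0) =
      (if i.val + (k + 1) ≤ j.val then A (f i) (f j) else 0) +
        if j.val + (k + 1) ≤ i.val then A (f j) (f i) else 0 := by
    intro i j
    rw [hA (f j)]
    unfold Nat.dist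
    split_ifs <;> first | ring1 | (exfalso; omega)
  simp only [split, sum_add_distrib]
  rw [sum_comm (f := fun i j => if j.val + (k + 1) ≤ i.val then A (f j) (f i) else 0),
    bandSum, bandPairs, sum_filter, Fintype.sum_prod_type]
  ring

variable [LinearOrder α]

-- `IsRobinsonSim A` unfolds to `IsRobinson A`, so the lemmas below apply to it as they stand.
def IsRobinson (A : α → α → ℝ) : Prop :=
  (∀ x y, A x y = A y x) ∧ ∀ x y z, x ≤ y → y ≤ z → A x z ≤ min (A x y) (A y z)

variable {A : α → α → ℝ}

theorem IsRobinson.apply_le_apply_of_le (hA : IsRobinson A) {x y M : α} (hxy : x ≤ y)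
    (hyM : y ≤ M) : A x M ≤ A y M :=
  (hA.2 x y M hxy hyM).trans (min_le_right _ _)

theorem IsRobinson.apply_min_le (hA : IsRobinson A) {x y M : α} (hx : x ≤ M) (hy : y ≤ M) :
    A (min x y) M ≤ A x y := by
  rcases le_total x y with h | h
  · rw [min_eq_left h]
    exact (hA.2 x y M h hy).trans (min_le_left _ _)
  · rw [min_eq_right h, hA.1 x y]
    exact (hA.2 y x M h hx).trans (min_le_left _ _)

theorem IsRobinson.sum_crossPair_last_le (hA : IsRobinson A) {m K : ℕ} (hm : 0 < m)
    {f h : Fin (K + 1) → α} (hf : Injective f) (hh : StrictMono h)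
    (hfh : Set.range f = Set.range h)
    {p : Fin (K + 1)} (hp : f p = h (Fin.last K)) :
    ∑ t, A (h (crossPair m (Fin.last K) t).1) (h (crossPair m (Fin.last K) t).2) ≤
      ∑ t, A (f (crossPair m p t).1) (f (crossPair m p t).2) := by
  choose ρ hρ using fun i => (hfh ▸ Set.mem_range_self i : f i ∈ Set.range h)
  have hρinj : Injective ρ := fun i j hij => hf (by rw [← hρ i, ← hρ j, hij])
  have hρp : ρ p = Fin.last K := hh.injective (by rw [hρ p, hp])
  -- `ρ i` is the rank of `f i` in `h`; `G` is clamped at `K` so that it is monotone on all of `ℕ`.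
  set G : ℕ → ℝ := fun r => A (h ⟨min r K, by omega⟩) (h (Fin.last K))
  have hG : Monotone G := fun r r' hr =>
    hA.apply_le_apply_of_le (hh.monotone (by simp only [Fin.mk_le_mk]; omega))
      (hh.monotone (Fin.le_last _))
  set ν := fun t => min (ρ (crossPair m p t).1).val (ρ (crossPair m p t).2).val
  have hsorted : ∀ t, A (h (crossPair m (Fin.last K) t).1) (h (crossPair m (Fin.last K) t).2)
      = G t := by
    intro t
    have hlast : (crossPair m (Fin.last K) t).2 = Fin.last K := by
      ext; simp only [crossPair, Fin.val_last]; omega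
    rw [hlast]
    rfl
  have hbound : ∀ t, G (ν t) ≤ A (f (crossPair m p t).1) (f (crossPair m p t).2) := by
    intro t
    have hν : (⟨min (ν t) K, by omega⟩ : Fin (K + 1)) =
        min (ρ (crossPair m p t).1) (ρ (crossPair m p t).2) := by
      ext; simp only [ν, Fin.coe_min]; omega
    have hle : ∀ i, f i ≤ h (Fin.last K) := fun i => hρ i ▸ hh.monotone (Fin.le_last _)
    calc G (ν t)
        = A (min (f (crossPair m p t).1) (f (crossPair m p t).2)) (h (Fin.last K)) := by
          simp only [G]; rw [hν, hh.monotone.map_min, hρ, hρ]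
      _ ≤ _ := hA.apply_min_le (hle _) (hle _)
  calc ∑ t, A (h (crossPair m (Fin.last K) t).1) (h (crossPair m (Fin.last K) t).2)
      = ∑ r ∈ range (univ.image ν).card, G r := by
        rw [card_image_of_injective _ (injective_min_rank_crossPair hm hρinj hρp), card_univ,
          Fintype.card_fin, ← Fin.sum_univ_eq_sum_range]
        exact sum_congr rfl fun t _ => hsorted t
    _ ≤ ∑ r ∈ univ.image ν, G r := sum_range_card_le_sum hG _
    _ = ∑ t, G (ν t) := sum_image fun t _ t' _ h => injective_min_rank_crossPair hm hρinj hρp h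
    _ ≤ _ := sum_le_sum fun t _ => hbound t

theorem IsRobinson.bandSum_le_of_range_eq (hA : IsRobinson A) {m : ℕ} (hm : 0 < m) :
    ∀ {N : ℕ} {f h : Fin N → α}, Injective f → StrictMono h → Set.range f = Set.range h →
      bandSum A m h ≤ bandSum A m f
  | 0, _, _, _, _, _ => by simp [bandSum, bandPairs]
  | K + 1, f, h, hf, hh, hfh => by
    obtain ⟨p, hp⟩ : h (Fin.last K) ∈ Set.range f := hfh ▸ Set.mem_range_self _
    have hrange : Set.range (f ∘ p.succAbove) = Set.range (h ∘ (Fin.last K).succAbove) := by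
      rw [range_comp_succAbove hf, range_comp_succAbove hh.injective, hfh, hp]
    have hh' : StrictMono (h ∘ (Fin.last K).succAbove) := by
      simpa only [Fin.succAbove_last] using hh.comp Fin.strictMono_castSucc
    rw [bandSum_succ A m h (Fin.last K), bandSum_succ A m f p]
    exact add_le_add (hA.bandSum_le_of_range_eq hm (hf.comp Fin.succAbove_right_injective) hh'
      hrange) (hA.sum_crossPair_last_le hm hf hh hfh hp)

end Robinson

section Matrix

variable {n : ℕ}

theorem IsToeplitz.apply_add {B : Matrix (Fin n) (Fin n) ℝ} (hT : IsToeplitz B) :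
    ∀ (s d : ℕ) (h : s + d < n), B ⟨s, by omega⟩ ⟨s + d, h⟩ = B ⟨0, by omega⟩ ⟨d, by omega⟩
  | 0, d, _ => by simp only [zero_add]
  | s + 1, d, h => by
    rw [← hT.apply_add s d (by omega), hT ⟨s, by omega⟩ ⟨s + d, by omega⟩ (by dsimp only; omega)
      (by dsimp only; omega)]
    simp only [Nat.add_right_comm s 1 d]

theorem IsRobinsonDissim.exists_monotone_profile {B : Matrix (Fin n) (Fin n) ℝ}
    (hB : IsRobinsonDissim B) (hT : IsToeplitz B) :
    ∃ b : ℕ → ℝ, Monotone b ∧ ∀ i j : Fin n, B i j = b (Nat.dist i j) := by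
  rcases n with _ | n
  · exact ⟨0, monotone_const, fun i => i.elim0⟩
  refine ⟨fun d => B 0 ⟨min d n, by omega⟩, fun d e hde => ?_, ?_⟩
  · refine (le_max_left _ _).trans (hB.2 _ _ _ (Fin.zero_le _) ?_)
    simp only [Fin.mk_le_mk]; omega
  have upper : ∀ i j : Fin (n + 1), i ≤ j → B i j = B 0 ⟨min (j - i) n, by omega⟩ := by
    intro i j hij
    rw [Fin.le_iff_val_le_val] at hij
    calc B i j = B ⟨i, i.isLt⟩ ⟨i + (j - i), by omega⟩ := by congr; ext; dsimp only; omega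
      _ = _ := hT.apply_add i (j - i) (by omega)
      _ = _ := by congr; omega
  intro i j
  rcases le_total i j with hij | hij
  · rw [upper i j hij, Nat.dist_eq_sub_of_le hij]
  · rw [hB.1, upper j i hij, Nat.dist_eq_sub_of_le_right hij]

theorem eq_add_sum_ite_lt (b : ℕ → ℝ) {D N : ℕ} (hDN : D ≤ N) :
    b D = b 0 + ∑ k ∈ range N, if k < D then b (k + 1) - b k else 0 := by
  rw [← sum_filter, show (range N).filter (· < D) = range D by ext; simp; omega,
    sum_range_sub]
  ring

theorem mInner_eq_of_profile (X B : Matrix (Fin n) (Fin n) ℝ) {b : ℕ → ℝ}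
    (hb : ∀ i j : Fin n, B i j = b (Nat.dist i j)) :
    mInner X B = b 0 * ∑ i, ∑ j, X i j +
      ∑ k ∈ range n,
        (b (k + 1) - b k) * ∑ i : Fin n, ∑ j : Fin n, if k < Nat.dist i j then X i j else 0 := by
  have layer : ∀ i j : Fin n, X i j * B i j = b 0 * X i j +
      ∑ k ∈ range n, (b (k + 1) - b k) * if k < Nat.dist i j then X i j else 0 := by
    intro i j
    rw [hb, eq_add_sum_ite_lt b (N := n) (by unfold Nat.dist; omega), mul_add, mul_sum,
      mul_comm]
    congr 1
    refine sum_congr rfl fun k _ => ?_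
    split_ifs <;> ring
  simp only [mInner, layer, sum_add_distrib, mul_sum]
  congr 1
  rw [sum_congr rfl fun i _ => sum_comm, sum_comm]

theorem sum_permMat (A : Matrix (Fin n) (Fin n) ℝ) (π : Equiv.Perm (Fin n)) :
    ∑ i, ∑ j, permMat A π i j = ∑ i, ∑ j, A i j :=
  calc ∑ i, ∑ j, permMat A π i j = ∑ i, ∑ j, A (π i) j :=
        sum_congr rfl fun i _ => Equiv.sum_comp π (A (π i))
    _ = ∑ i, ∑ j, A i j := Equiv.sum_comp π fun i => ∑ j, A i j

theorem mInner_le_mInner_permMat_of_isToeplitz {A B : Matrix (Fin n) (Fin n) ℝ}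
    (hA : IsRobinsonSim A) (hB : IsRobinsonDissim B) (hT : IsToeplitz B)
    (π : Equiv.Perm (Fin n)) : mInner A B ≤ mInner (permMat A π) B := by
  obtain ⟨b, hb_mono, hb⟩ := hB.exists_monotone_profile hT
  have hfar : ∀ k, (∑ i : Fin n, ∑ j : Fin n, if k < Nat.dist i j then A i j else 0) ≤
      ∑ i : Fin n, ∑ j : Fin n, if k < Nat.dist i j then permMat A π i j else 0 := fun k =>
    calc _ = 2 * bandSum A (k + 1) (id : Fin n → Fin n) :=
          sum_ite_lt_dist_eq_two_mul_bandSum hA.1 k id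
      _ ≤ 2 * bandSum A (k + 1) π := by
          gcongr
          exact IsRobinson.bandSum_le_of_range_eq hA k.succ_pos π.injective strictMono_id
            (by simp)
      _ = _ := (sum_ite_lt_dist_eq_two_mul_bandSum hA.1 k π).symm
  rw [mInner_eq_of_profile A B hb, mInner_eq_of_profile _ B hb, sum_permMat]
  refine add_le_add le_rfl (sum_le_sum fun k _ => ?_)
  exact mul_le_mul_of_nonneg_left (hfar k) (sub_nonneg.2 (hb_mono k.le_succ))

theorem IsRobinsonDissim.neg {B : Matrix (Fin n) (Fin n) ℝ} (hB : IsRobinsonDissim B) :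
    IsRobinsonSim (-B) :=
  ⟨fun i j => by simp only [Matrix.neg_apply, hB.1 i j], fun i j k hij hjk => by
    simpa only [Matrix.neg_apply, min_neg_neg] using neg_le_neg (hB.2 i j k hij hjk)⟩

theorem IsRobinsonSim.neg {A : Matrix (Fin n) (Fin n) ℝ} (hA : IsRobinsonSim A) :
    IsRobinsonDissim (-A) :=
  ⟨fun i j => by simp only [Matrix.neg_apply, hA.1 i j], fun i j k hij hjk => by
    simpa only [Matrix.neg_apply, max_neg_neg] using neg_le_neg (hA.2 i j k hij hjk)⟩

theorem IsToeplitz.neg {A : Matrix (Fin n) (Fin n) ℝ} (hT : IsToeplitz A) : IsToeplitz (-A) :=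
  fun i j hi hj => by simp only [Matrix.neg_apply, hT i j hi hj]

theorem permMat_neg (A : Matrix (Fin n) (Fin n) ℝ) (π : Equiv.Perm (Fin n)) :
    permMat (-A) π = -permMat A π :=
  rfl

theorem mInner_neg_neg (X Y : Matrix (Fin n) (Fin n) ℝ) : mInner (-X) (-Y) = mInner X Y := by
  simp only [mInner, Matrix.neg_apply, neg_mul_neg]

theorem mInner_comm (X Y : Matrix (Fin n) (Fin n) ℝ) : mInner X Y = mInner Y X := by
  simp only [mInner, mul_comm]

theorem mInner_permMat (X Y : Matrix (Fin n) (Fin n) ℝ) (π : Equiv.Perm (Fin n)) :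
    mInner (permMat X π) Y = mInner X (permMat Y π.symm) :=
  Fintype.sum_equiv π _ _ fun i => Fintype.sum_equiv π _ _ fun j => by
    simp only [permMat, Matrix.of_apply, Equiv.symm_apply_apply]

end Matrix

/-- if `A` is a Robinson similarity, `B` is a Robinson dissimilarity,
and at least one of `A` or `B` is Toeplitz, then the identity permutation is optimal
for `QAP(A,B)`: `⟨A_π, B⟩ ≥ ⟨A, B⟩` for every permutation `π`. -/
theorem identity_optimal_QAP {n : ℕ}
    (A B : Matrix (Fin n) (Fin n) ℝ)
    (hA : IsRobinsonSim A) (hB : IsRobinsonDissim B)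
    (hT : IsToeplitz A ∨ IsToeplitz B) (π : Equiv.Perm (Fin n)) :
    mInner (permMat A π) B ≥ mInner A B := by
  rcases hT with hTA | hTB
  · have key := mInner_le_mInner_permMat_of_isToeplitz hB.neg hA.neg hTA.neg π.symm
    rwa [permMat_neg, mInner_neg_neg, mInner_neg_neg, mInner_comm B, mInner_comm _ A,
      ← mInner_permMat] at key
  · exact mInner_le_mInner_permMat_of_isToeplitz hA hB hTB π
end

section
/- Let A be an n×n symmetric matrix and let π be a permutation of [n] such that the permuted matrix A_π = (A_{π(i)π(j)}) can be written as a conic (nonnegative) combination of cut matrices CUT(u,v). Then π is optimal for the 2-SUM problem on A; that is, for every permutation σ of [n], ∑_{i,j=1}^n A_{σ(i)σ(j)} (i−j)^2 ≥ ∑_{i,j=1}^n A_{π(i)π(j)} (i−j)^2. -/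
/-- The cut matrix `CUT(u,v)` (with `1`-based indices `1 ≤ u ≤ v ≤ n`): its `(i,j)`
entry is `1` if `u ≤ i, j ≤ v` and `0` otherwise. -/
def CutMat (n u v : ℕ) : Matrix (Fin n) (Fin n) ℝ :=
  Matrix.of fun i j =>
    if u ≤ i.val + 1 ∧ i.val + 1 ≤ v ∧ u ≤ j.val + 1 ∧ j.val + 1 ≤ v then 1 else 0

/-- `A` is a conic (nonnegative) combination of cut matrices `CUT(u,v)`, `1 ≤ u ≤ v ≤ n`. -/
def IsConicCombOfCuts {n : ℕ} (A : Matrix (Fin n) (Fin n) ℝ) : Prop :=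
  ∃ (s : Finset (ℕ × ℕ)) (c : ℕ × ℕ → ℝ),
    (∀ p ∈ s, 0 ≤ c p ∧ 1 ≤ p.1 ∧ p.1 ≤ p.2 ∧ p.2 ≤ n) ∧
    A = ∑ p ∈ s, c p • CutMat n p.1 p.2

/-- The 2-SUM objective `∑_{i,j} A (π i) (π j) (i - j)²`. -/
def twoSum {n : ℕ} (A : Matrix (Fin n) (Fin n) ℝ) (π : Equiv.Perm (Fin n)) : ℝ :=
  ∑ i, ∑ j, A (π i) (π j) * ((i.val : ℝ) - (j.val : ℝ)) ^ 2

/-!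
The 2-SUM objective is linear in the matrix, so it suffices to show that the identity is optimal
for a single cut matrix `CUT(u,v)`. Under a permutation `τ` its objective is `∑ (x - y)²` over
the positions `x, y` that `τ` assigns to the `k` indices of `[u,v]`. Listing these positions in
increasing order, consecutive ones differ by at least `1`, so the `a`-th and `b`-th differ by at
least `|a - b|`; hence the objective is smallest when the positions are `k` consecutive integers,
which is what the identity does.
-/

open Finset

def sumSqDiff (S : Finset ℕ) : ℝ := ∑ i ∈ S, ∑ j ∈ S, ((i : ℝ) - j) ^ 2

theorem Fin.sub_le_sub_of_strictMono {k : ℕ} {f : Fin k → ℕ} (hf : StrictMono f) {a b : Fin k}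
    (hab : a ≤ b) : (b : ℕ) - a ≤ f b - f a := by
  have hsub : (Icc a b).image f ⊆ Icc (f a) (f b) := by
    intro x
    simp only [mem_image, mem_Icc]
    rintro ⟨c, ⟨hac, hcb⟩, rfl⟩
    exact ⟨hf.monotone hac, hf.monotone hcb⟩
  have hcard := card_le_card hsub
  rw [card_image_of_injective _ hf.injective, Fin.card_Icc, Nat.card_Icc] at hcard
  omega

theorem Fin.sq_sub_le_sq_sub_of_strictMono {k : ℕ} {f : Fin k → ℕ} (hf : StrictMono f)
    (a b : Fin k) : ((a : ℝ) - b) ^ 2 ≤ ((f a : ℝ) - f b) ^ 2 := by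
  wlog hab : a ≤ b generalizing a b
  · simpa only [sub_sq_comm] using this b a (le_of_not_ge hab)
  have hgap : (b : ℕ) + f a ≤ f b + a := by
    have := Fin.sub_le_sub_of_strictMono hf hab
    have := hf.monotone hab
    have : (a : ℕ) ≤ b := hab
    omega
  have hgapℝ : ((b : ℕ) : ℝ) + f a ≤ f b + (a : ℕ) := by exact_mod_cast hgap
  have hab' : ((a : ℕ) : ℝ) ≤ (b : ℕ) := by exact_mod_cast hab
  nlinarith

theorem sumSqDiff_range_card_le (S : Finset ℕ) : sumSqDiff (range #S) ≤ sumSqDiff S := by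
  set f := S.orderEmbOfFin rfl
  have hS : sumSqDiff S = ∑ a : Fin #S, ∑ b : Fin #S, ((f a : ℝ) - f b) ^ 2 := by
    calc sumSqDiff S
        = ∑ i ∈ univ.map f.toEmbedding, ∑ j ∈ univ.map f.toEmbedding, ((i : ℝ) - j) ^ 2 := by
          rw [S.map_orderEmbOfFin_univ rfl, sumSqDiff]
      _ = _ := by simp only [sum_map]; rfl
  have hrange : sumSqDiff (range #S) = ∑ a : Fin #S, ∑ b : Fin #S, ((a : ℝ) - b) ^ 2 := by
    rw [sumSqDiff, ← Fin.sum_univ_eq_sum_range]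
    simp only [← Fin.sum_univ_eq_sum_range (fun j => ((_ : ℝ) - j) ^ 2)]
  rw [hS, hrange]
  exact sum_le_sum fun a _ => sum_le_sum fun b _ =>
    Fin.sq_sub_le_sq_sub_of_strictMono f.strictMono a b

theorem sumSqDiff_Ico_add (m k : ℕ) : sumSqDiff (Ico m (m + k)) = sumSqDiff (range k) := by
  simp only [sumSqDiff, sum_Ico_eq_sum_range, Nat.add_sub_cancel_left]
  push_cast
  simp only [add_sub_add_left_eq_sub]

theorem sumSqDiff_Ico_le {a b : ℕ} {S : Finset ℕ} (hS : #S = b - a) :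
    sumSqDiff (Ico a b) ≤ sumSqDiff S := by
  have hIco : Ico a b = Ico a (a + #S) := by ext; simp only [mem_Ico]; omega
  rw [hIco, sumSqDiff_Ico_add]
  exact sumSqDiff_range_card_le S

section TwoSum

variable {n : ℕ}

theorem twoSum_eq_sum_inv (A : Matrix (Fin n) (Fin n) ℝ) (τ : Equiv.Perm (Fin n)) :
    twoSum A τ = ∑ i, ∑ j, A i j * (((τ⁻¹ i : ℕ) : ℝ) - (τ⁻¹ j : ℕ)) ^ 2 := by
  conv_rhs => rw [← Equiv.sum_comp τ]
  refine sum_congr rfl fun i _ => ?_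
  conv_rhs => rw [← Equiv.sum_comp τ]
  simp only [Equiv.Perm.coe_inv, Equiv.symm_apply_apply]

theorem twoSum_sum_smul {ι : Type*} (s : Finset ι) (c : ι → ℝ)
    (M : ι → Matrix (Fin n) (Fin n) ℝ) (τ : Equiv.Perm (Fin n)) :
    twoSum (∑ p ∈ s, c p • M p) τ = ∑ p ∈ s, c p * twoSum (M p) τ := by
  simp only [twoSum, Matrix.sum_apply, Matrix.smul_apply, smul_eq_mul, sum_mul, mul_sum,
    sum_comm (s := s), mul_assoc]

theorem twoSum_permMat (A : Matrix (Fin n) (Fin n) ℝ) (π τ : Equiv.Perm (Fin n)) :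
    twoSum (permMat A π) τ = twoSum A (π * τ) := rfl

def cutSupport (n u v : ℕ) : Finset (Fin n) := univ.filter fun i => u ≤ i.val + 1 ∧ i.val + 1 ≤ v

theorem twoSum_cutMat (u v : ℕ) (τ : Equiv.Perm (Fin n)) :
    twoSum (CutMat n u v) τ = sumSqDiff ((cutSupport n u v).image fun i => (τ⁻¹ i : ℕ)) := by
  have hinj : Function.Injective fun i => (τ⁻¹ i : ℕ) := Fin.val_injective.comp τ⁻¹.injective
  rw [twoSum_eq_sum_inv, sumSqDiff, sum_image hinj.injOn, cutSupport, sum_filter]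
  refine sum_congr rfl fun i _ => ?_
  rw [sum_image hinj.injOn, sum_filter]
  by_cases hi : u ≤ i.val + 1 ∧ i.val + 1 ≤ v
  · rw [if_pos hi]
    refine sum_congr rfl fun j _ => ?_
    by_cases hj : u ≤ j.val + 1 ∧ j.val + 1 ≤ v
    · simp only [CutMat, Matrix.of_apply, hi, hj, and_self, if_true, one_mul]
    · simp only [CutMat, Matrix.of_apply, hj, and_false, if_false, zero_mul]
  · rw [if_neg hi]
    exact sum_eq_zero fun j _ => by simp only [CutMat, Matrix.of_apply, ← and_assoc, hi,
      false_and, if_false, zero_mul]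

theorem image_val_cutSupport (u v : ℕ) :
    (cutSupport n u v).image (fun i : Fin n => (i : ℕ)) = Ico (u - 1) (min v n) := by
  ext x
  simp only [cutSupport, mem_image, mem_filter, mem_univ, true_and, mem_Ico]
  constructor
  · rintro ⟨i, hi, rfl⟩
    have := i.isLt
    omega
  · intro hx
    exact ⟨⟨x, by omega⟩, by simp only; omega, rfl⟩

theorem twoSum_cutMat_one_le (u v : ℕ) (τ : Equiv.Perm (Fin n)) :
    twoSum (CutMat n u v) 1 ≤ twoSum (CutMat n u v) τ := by
  have hinj : Function.Injective fun i => (τ⁻¹ i : ℕ) := Fin.val_injective.comp τ⁻¹.injective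
  rw [twoSum_cutMat, twoSum_cutMat, inv_one]
  simp only [Equiv.Perm.coe_one, id_eq, image_val_cutSupport]
  apply sumSqDiff_Ico_le
  rw [card_image_of_injective _ hinj, ← Nat.card_Ico, ← image_val_cutSupport,
    card_image_of_injective _ Fin.val_injective]

end TwoSum

theorem perm_optimal_twoSum_of_cuts_general {n : ℕ}
    (A : Matrix (Fin n) (Fin n) ℝ)
    (π : Equiv.Perm (Fin n)) (hA : IsConicCombOfCuts (permMat A π))
    (σ : Equiv.Perm (Fin n)) :
    twoSum A σ ≥ twoSum A π := by
  obtain ⟨s, c, hc, hAπ⟩ := hA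
  have hcomb (τ : Equiv.Perm (Fin n)) :
      twoSum A (π * τ) = ∑ p ∈ s, c p * twoSum (CutMat n p.1 p.2) τ := by
    rw [← twoSum_permMat, hAπ, twoSum_sum_smul]
  calc twoSum A π
      = twoSum A (π * 1) := by rw [mul_one]
    _ ≤ twoSum A (π * (π⁻¹ * σ)) := by
      rw [hcomb, hcomb]
      exact sum_le_sum fun p hp =>
        mul_le_mul_of_nonneg_left (twoSum_cutMat_one_le _ _ _) (hc p hp).1
    _ = twoSum A σ := by rw [mul_inv_cancel_left]

/-- if `A_π` is a conic combination of cut matrices, then `π` is optimal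
for the 2-SUM problem on `A`. -/
theorem perm_optimal_twoSum_of_cuts {n : ℕ}
    (A : Matrix (Fin n) (Fin n) ℝ) (hAsym : ∀ i j, A i j = A j i)
    (π : Equiv.Perm (Fin n)) (hA : IsConicCombOfCuts (permMat A π))
    (σ : Equiv.Perm (Fin n)) :
    twoSum A σ ≥ twoSum A π :=
  perm_optimal_twoSum_of_cuts_general A π hA σ
end

section
/- Let n ≥ 2, let Δ be an integer with 1 ≤ Δ ≤ n−1, let π be a permutation of [n], and let k = π^{-1}(n). Then there exists a set F ⊆ E^Δ_n such that: (C1) |F| = Δ; (C2) the values min{π(i), π(j)} over the pairs {i,j} ∈ F are pairwise distinct; (C4) no pair in R = E^Δ_n \ F contains the element k; and (C5) no diagonal pair {i, n−Δ+i} with k+1−n+Δ ≤ i ≤ k−1 and 1 ≤ i ≤ Δ belongs to R. -/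
/-!
The set `F` consists of all pairs of `E^Δ_n` through `k` together with the diagonal pairs of
the window in (C5); there are exactly `Δ` of them, so (C1), (C4) and (C5) hold by construction.
For (C2): `π k = n` is the largest value of `π` on `[n]`, so the minimum of `π` over a pair
of `F` is attained at an endpoint other than `k`, and no point other than `k` lies on two
pairs of `F`.
-/

/-- The set `E^Δ_n = {{i, n - Δ + j} : 1 ≤ i ≤ j ≤ Δ}` of unordered pairs of elements
of `[n] = {1,…,n}`. Since `i ≤ Δ < n - Δ + j` for every such pair, each unordered pair
is represented canonically by the ordered pair whose first coordinate is the smaller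
element. -/
def EDeltaPairs (n Δ : ℕ) : Finset (ℕ × ℕ) :=
  ((Finset.Icc 1 Δ ×ˢ Finset.Icc 1 Δ).filter (fun p => p.1 ≤ p.2)).image
    (fun p => (p.1, n - Δ + p.2))

open Finset

lemma Equiv.Perm.apply_mem_of_forall_notMem {α : Type*} {π : Equiv.Perm α} {s : Set α}
    (hπ : ∀ x ∉ s, π x = x) {x : α} (hx : x ∈ s) : π x ∈ s := by
  by_contra h
  rw [π.injective (hπ _ h)] at h
  exact h hx

lemma exists_ne_min_apply_eq {α β : Type*} [LinearOrder β] {σ : α → β} {k a b : α}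
    (hab : a ≠ b) (ha : σ a ≤ σ k) (hb : σ b ≤ σ k) :
    ∃ c, (c = a ∨ c = b) ∧ c ≠ k ∧ min (σ a) (σ b) = σ c := by
  by_cases hak : a = k
  · exact ⟨b, .inr rfl, hak ▸ hab.symm, by subst hak; exact min_eq_right hb⟩
  by_cases hbk : b = k
  · exact ⟨a, .inl rfl, hak, by subst hbk; exact min_eq_left ha⟩
  rcases le_total (σ a) (σ b) with h | h
  · exact ⟨a, .inl rfl, hak, min_eq_left h⟩
  · exact ⟨b, .inr rfl, hbk, min_eq_right h⟩

lemma Set.injOn_min_of_apply_le {α β : Type*} [LinearOrder β] {σ : α → β}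
    (hσ : Function.Injective σ) {k : α} {F : Set (α × α)} (hne : ∀ p ∈ F, p.1 ≠ p.2)
    (hle : ∀ p ∈ F, σ p.1 ≤ σ k ∧ σ p.2 ≤ σ k)
    (huniq : ∀ p ∈ F, ∀ q ∈ F, ∀ c ≠ k, (c = p.1 ∨ c = p.2) → (c = q.1 ∨ c = q.2) → p = q) :
    Set.InjOn (fun p => min (σ p.1) (σ p.2)) F := by
  intro p hp q hq hpq
  obtain ⟨c, hcp, hck, hc⟩ := exists_ne_min_apply_eq (hne p hp) (hle p hp).1 (hle p hp).2
  obtain ⟨d, hdq, -, hd⟩ := exists_ne_min_apply_eq (hne q hq) (hle q hq).1 (hle q hq).2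
  have hcd : c = d := hσ (hc.symm.trans (hpq.trans hd))
  exact huniq p hp q hq c hck hcp (hcd ▸ hdq)

lemma mem_EDeltaPairs {n Δ a b : ℕ} :
    (a, b) ∈ EDeltaPairs n Δ ↔ 1 ≤ a ∧ n - Δ + a ≤ b ∧ b ≤ n - Δ + Δ := by
  simp only [EDeltaPairs, mem_image, mem_filter, mem_product, mem_Icc, Prod.exists,
    Prod.mk.injEq]
  constructor
  · rintro ⟨a, j, ⟨⟨⟨ha, -⟩, -, hj⟩, haj⟩, rfl, rfl⟩
    omega
  · rintro ⟨ha, hab, hb⟩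
    exact ⟨a, b - (n - Δ), by omega, rfl, by omega⟩

/-- The `i`-th pair of `F`: for `i ≥ k` the pair `{k, n - Δ + i}`, for `i ≤ k - (n - Δ)` the
pair `{i, k}`, and in between the diagonal pair `{i, n - Δ + i}`. -/
def selectedPair (n Δ k i : ℕ) : ℕ × ℕ :=
  (min i k, n - Δ + max i (k - (n - Δ)))

def selectedPairs (n Δ k : ℕ) : Finset (ℕ × ℕ) :=
  (Icc 1 Δ).image (selectedPair n Δ k)

section selectedPairs

variable {n Δ k : ℕ}

lemma selectedPair_injective : Function.Injective (selectedPair n Δ k) := by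
  intro i j h
  simp only [selectedPair, Prod.mk.injEq] at h
  omega

lemma card_selectedPairs : (selectedPairs n Δ k).card = Δ := by
  rw [selectedPairs, card_image_of_injective _ selectedPair_injective, Nat.card_Icc,
    Nat.add_sub_cancel]

lemma selectedPairs_subset_EDeltaPairs (hk₁ : 1 ≤ k) (hkn : k ≤ n) :
    selectedPairs n Δ k ⊆ EDeltaPairs n Δ := by
  simp only [subset_iff, selectedPairs, mem_image, mem_Icc]
  rintro _ ⟨i, ⟨hi₁, hiΔ⟩, rfl⟩
  rw [selectedPair, mem_EDeltaPairs]
  omega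

lemma selectedPair_fst_ne_snd (hΔ : Δ < n) (i : ℕ) :
    (selectedPair n Δ k i).1 ≠ (selectedPair n Δ k i).2 := by
  simp only [selectedPair]
  omega

lemma eq_of_mem_selectedPair {i j c : ℕ} (hck : c ≠ k)
    (hi : c = (selectedPair n Δ k i).1 ∨ c = (selectedPair n Δ k i).2)
    (hj : c = (selectedPair n Δ k j).1 ∨ c = (selectedPair n Δ k j).2) : i = j := by
  simp only [selectedPair] at hi hj
  omega

lemma mem_selectedPairs_of_mem_EDeltaPairs {p : ℕ × ℕ} (hp : p ∈ EDeltaPairs n Δ)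
    (hk : p.1 = k ∨ p.2 = k) : p ∈ selectedPairs n Δ k := by
  obtain ⟨a, b⟩ := p
  rw [mem_EDeltaPairs] at hp
  simp only [selectedPairs, mem_image, mem_Icc, selectedPair, Prod.mk.injEq]
  rcases hk with rfl | rfl
  · exact ⟨b - (n - Δ), by omega, by omega, by omega⟩
  · exact ⟨a, by omega, by omega, by omega⟩

lemma diag_mem_selectedPairs {i : ℕ} (hi₁ : 1 ≤ i) (hiΔ : i ≤ Δ) (hki : k + 1 + Δ ≤ n + i)
    (hik : i + 1 ≤ k) : (i, n - Δ + i) ∈ selectedPairs n Δ k := by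
  simp only [selectedPairs, mem_image, mem_Icc, selectedPair, Prod.mk.injEq]
  exact ⟨i, ⟨hi₁, hiΔ⟩, by omega, by omega⟩

lemma injOn_min_selectedPairs {σ : ℕ → ℕ} (hσ : Function.Injective σ) (hk₁ : 1 ≤ k)
    (hkn : k ≤ n) (hΔ : Δ < n) (hle : ∀ x ∈ Icc 1 n, σ x ≤ σ k) :
    Set.InjOn (fun p : ℕ × ℕ => min (σ p.1) (σ p.2)) ↑(selectedPairs n Δ k) := by
  have hmem : ∀ p ∈ selectedPairs n Δ k, p.1 ∈ Icc 1 n ∧ p.2 ∈ Icc 1 n := fun p hp => by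
    have := selectedPairs_subset_EDeltaPairs hk₁ hkn hp
    rw [← Prod.mk.eta (p := p), mem_EDeltaPairs] at this
    simp only [mem_Icc]
    omega
  refine Set.injOn_min_of_apply_le hσ (k := k) ?_
    (fun p hp => ⟨hle _ (hmem p hp).1, hle _ (hmem p hp).2⟩) ?_
  · simp only [selectedPairs, coe_image, Set.forall_mem_image]
    exact fun i _ => selectedPair_fst_ne_snd hΔ i
  · simp only [selectedPairs, coe_image, Set.forall_mem_image]
    exact fun i _ j _ c hck hi hj => congrArg _ (eq_of_mem_selectedPair hck hi hj)

end selectedPairs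

theorem exists_F_satisfying_C1_C2_C4_C5_general {n Δ : ℕ} (hn : 2 ≤ n)
    (hΔ2 : Δ ≤ n - 1)
    (π : Equiv.Perm ℕ) (hπ : ∀ i, i ∉ Finset.Icc 1 n → π i = i) :
    ∃ F : Finset (ℕ × ℕ), F ⊆ EDeltaPairs n Δ ∧
      F.card = Δ ∧
      Set.InjOn (fun p : ℕ × ℕ => min (π p.1) (π p.2)) ↑F ∧
      (∀ p ∈ EDeltaPairs n Δ \ F, p.1 ≠ π.symm n ∧ p.2 ≠ π.symm n) ∧
      (∀ i, 1 ≤ i → i ≤ Δ → π.symm n + 1 + Δ ≤ n + i → i + 1 ≤ π.symm n →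
        (i, n - Δ + i) ∉ EDeltaPairs n Δ \ F) := by
  set k := π.symm n
  have hπk : π k = n := π.apply_symm_apply n
  obtain ⟨hk₁, hkn⟩ : 1 ≤ k ∧ k ≤ n := by
    by_contra hk
    have := hπ k (by rwa [mem_Icc])
    omega
  have hle : ∀ x ∈ Icc 1 n, π x ≤ π k := fun x hx => by
    have : π x ∈ (Icc 1 n : Set ℕ) := Equiv.Perm.apply_mem_of_forall_notMem hπ hx
    exact hπk ▸ (mem_Icc.mp this).2
  refine ⟨selectedPairs n Δ k, selectedPairs_subset_EDeltaPairs hk₁ hkn, card_selectedPairs,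
    injOn_min_selectedPairs π.injective hk₁ hkn (by omega) hle, ?_, ?_⟩
  · intro p hp
    obtain ⟨hpE, hpF⟩ := mem_sdiff.mp hp
    by_contra hpk
    exact hpF (mem_selectedPairs_of_mem_EDeltaPairs hpE (by tauto))
  · exact fun i hi₁ hiΔ hki hik hmem =>
      (mem_sdiff.mp hmem).2 (diag_mem_selectedPairs hi₁ hiΔ hki hik)

/-- let `2 ≤ n`, `1 ≤ Δ ≤ n - 1`, let `π` be a permutation of `[n]`
(modelled as a permutation of `ℕ` fixing every point outside `{1,…,n}`) and let
`k = π⁻¹ n`. Then there is a set `F ⊆ E^Δ_n` with: (C1) `|F| = Δ`; (C2) the values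
`min (π i) (π j)` over the pairs `{i,j} ∈ F` are pairwise distinct; (C4) no pair in
`R = E^Δ_n \ F` contains `k`; (C5) no diagonal pair `{i, n - Δ + i}` with
`k + 1 - n + Δ ≤ i ≤ k - 1` (and `1 ≤ i ≤ Δ`) lies in `R`. -/
theorem exists_F_satisfying_C1_C2_C4_C5 {n Δ : ℕ} (hn : 2 ≤ n)
    (hΔ1 : 1 ≤ Δ) (hΔ2 : Δ ≤ n - 1)
    (π : Equiv.Perm ℕ) (hπ : ∀ i, i ∉ Finset.Icc 1 n → π i = i) :
    ∃ F : Finset (ℕ × ℕ), F ⊆ EDeltaPairs n Δ ∧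
      F.card = Δ ∧
      Set.InjOn (fun p : ℕ × ℕ => min (π p.1) (π p.2)) ↑F ∧
      (∀ p ∈ EDeltaPairs n Δ \ F, p.1 ≠ π.symm n ∧ p.2 ≠ π.symm n) ∧
      (∀ i, 1 ≤ i → i ≤ Δ → π.symm n + 1 + Δ ≤ n + i → i + 1 ≤ π.symm n →
        (i, n - Δ + i) ∉ EDeltaPairs n Δ \ F) :=
  exists_F_satisfying_C1_C2_C4_C5_general hn hΔ2 π hπ
end
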